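/- arXiv:2108.06605 — 4 statements merged into one kernel-verified Lean document; each statement's English description precedes it below -/
import Mathlib

section
/- Let β ∈ ℝ^p and let s < p be a positive integer. If β↓_s = 0 or β↓_s > β↓_{s+1}, then the Euclidean projection Π_{Σ_s^p}(β) consists of exactly one vector u, given by u_i = β_i whenever |β_i| ≥ β↓_s and u_i = 0 whenever |β_i| < β↓_s. -/
/-!
The entries of `β` of magnitude at least `τ = β↓_s` form a set `S`, which has exactly `s`
elements when `β↓_s > β↓_{s+1}`. For `v` supported on `Γ`,
`‖v - β‖² = ∑_{i ∈ Γ} (v_i - β_i)² + ‖β‖² - ∑_{i ∈ Γ} β_i²`, while the hard-thresholded `u`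
attains `‖β‖² - ∑_{i ∈ S} β_i²`. Every entry on `S` strictly beats every entry off `S` in
magnitude, so among index sets of size at most `s` the sum `∑_{i ∈ T} β_i²` is uniquely
maximised by `S`; equality then forces `Γ = S` and `v = β` on `S`, i.e. `v = u`.
If `β↓_s = 0`, then `β` has fewer than `s` nonzero entries and is its own projection.
-/

open Matrix Filter Topology Finset
open scoped RealInnerProductSpace

noncomputable section SCL

/-- the zero "norm" of a vector: the number of its nonzero entries. -/
def zeroNorm {p : ℕ} (x : EuclideanSpace ℝ (Fin p)) : ℕ :=
  {i | x i ≠ 0}.ncard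

/-- the `k`-th largest entry in magnitude (`1`-indexed; junk value `0` if `k = 0` or `k > p`). -/
def kthLargestAbs {p : ℕ} (x : EuclideanSpace ℝ (Fin p)) (k : ℕ) : ℝ :=
  ((Finset.univ.val.map fun i => |x i|).sort (· ≤ ·)).getD (p - k) 0

/-- the (set-valued) Euclidean projection onto a set `S`. -/
def projSet {m : ℕ} (S : Set (EuclideanSpace ℝ (Fin m))) (w : EuclideanSpace ℝ (Fin m)) :
    Set (EuclideanSpace ℝ (Fin m)) :=
  {u | u ∈ S ∧ ∀ v ∈ S, ‖u - w‖ ≤ ‖v - w‖}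

/-- the first block `β₁` of `β = (β₁; β₂)`. -/
def part1 {p₁ p₂ : ℕ} (β : EuclideanSpace ℝ (Fin (p₁ + p₂))) : EuclideanSpace ℝ (Fin p₁) :=
  WithLp.toLp 2 (fun i => β (Fin.castAdd p₂ i))

/-- the second block `β₂` of `β = (β₁; β₂)`. -/
def part2 {p₁ p₂ : ℕ} (β : EuclideanSpace ℝ (Fin (p₁ + p₂))) : EuclideanSpace ℝ (Fin p₂) :=
  WithLp.toLp 2 (fun i => β (Fin.natAdd p₁ i))

/-- the logistic loss `ℓ_log(β; X, y)`. -/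
def ellLog {n p : ℕ} (X : Matrix (Fin n) (Fin p) ℝ) (y : Fin n → ℝ)
    (β : EuclideanSpace ℝ (Fin p)) : ℝ :=
  ∑ i, (Real.log (1 + Real.exp (X.mulVec β i)) - y i * X.mulVec β i)

/-- the linear regression loss `ℓ_lin(β; X, y)`. -/
def ellLin {n p : ℕ} (X : Matrix (Fin n) (Fin p) ℝ) (y : Fin n → ℝ)
    (β : EuclideanSpace ℝ (Fin p)) : ℝ :=
  (1 / 2) * ∑ i, (y i - X.mulVec β i) ^ 2

/-- the SCL objective `f(β₁,β₂) = (1/n) (a ℓ₁(β₁;X,y) + b ℓ₂(β₂;Z,y) + (c/2)‖Xβ₁ − Zβ₂‖²)`,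
as a function of the merged vector `β = (β₁; β₂)`. -/
def sclObj {n p₁ p₂ : ℕ}
    (ℓ₁ : Matrix (Fin n) (Fin p₁) ℝ → (Fin n → ℝ) → EuclideanSpace ℝ (Fin p₁) → ℝ)
    (ℓ₂ : Matrix (Fin n) (Fin p₂) ℝ → (Fin n → ℝ) → EuclideanSpace ℝ (Fin p₂) → ℝ)
    (X : Matrix (Fin n) (Fin p₁) ℝ) (Z : Matrix (Fin n) (Fin p₂) ℝ) (y : Fin n → ℝ)
    (a b c : ℝ) (β : EuclideanSpace ℝ (Fin (p₁ + p₂))) : ℝ :=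
  (1 / (n : ℝ)) * (a * ℓ₁ X y (part1 β) + b * ℓ₂ Z y (part2 β)
    + (c / 2) * ∑ i, (X.mulVec (part1 β) i - Z.mulVec (part2 β) i) ^ 2)

/-- the largest eigenvalue of a symmetric matrix, via the Rayleigh quotient. -/
def lambdaMax {ι : Type*} [Fintype ι] (M : Matrix ι ι ℝ) : ℝ :=
  sSup {r | ∃ v : EuclideanSpace ℝ ι, ‖v‖ = 1 ∧ r = ∑ i, v i * M.mulVec v i}

/-- the smallest eigenvalue of a symmetric matrix, via the Rayleigh quotient. -/
def lambdaMin {ι : Type*} [Fintype ι] (M : Matrix ι ι ℝ) : ℝ :=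
  sInf {r | ∃ v : EuclideanSpace ℝ ι, ‖v‖ = 1 ∧ r = ∑ i, v i * M.mulVec v i}

/-- the 2×2 block matrix `[[A, B], [C, D]]`, indexed by `Fin (p₁ + p₂)`. -/
def blockMat {p₁ p₂ : ℕ} (A : Matrix (Fin p₁) (Fin p₁) ℝ) (B : Matrix (Fin p₁) (Fin p₂) ℝ)
    (C : Matrix (Fin p₂) (Fin p₁) ℝ) (D : Matrix (Fin p₂) (Fin p₂) ℝ) :
    Matrix (Fin (p₁ + p₂)) (Fin (p₁ + p₂)) ℝ :=
  Matrix.reindex finSumFinEquiv finSumFinEquiv (Matrix.fromBlocks A B C D)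

/-- a square matrix as a continuous linear map on Euclidean space. -/
def matCLM {ι : Type*} [Fintype ι] [DecidableEq ι] (M : Matrix ι ι ℝ) :
    EuclideanSpace ℝ ι →L[ℝ] EuclideanSpace ℝ ι :=
  LinearMap.toContinuousLinearMap (Matrix.toEuclideanLin M)

/-- `A` is `s`-regular if any `s` of its columns are linearly independent. -/
def sRegular {n p : ℕ} (A : Matrix (Fin n) (Fin p) ℝ) (s : ℕ) : Prop :=
  ∀ T : Finset (Fin p), T.card = s →
    LinearIndependent ℝ (fun j : {x // x ∈ T} => Aᵀ j.1)

/-- the feasible set `Σ = Σ_{s₁}^{p₁} × Σ_{s₂}^{p₂}` of the SCL problem, in merged form. -/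
def feas (p₁ p₂ s₁ s₂ : ℕ) : Set (EuclideanSpace ℝ (Fin (p₁ + p₂))) :=
  {β | zeroNorm (part1 β) ≤ s₁ ∧ zeroNorm (part2 β) ≤ s₂}

/-- `β` is an `α`-stationary point of the SCL problem with objective `f`. -/
def alphaStat {p₁ p₂ : ℕ} (f : EuclideanSpace ℝ (Fin (p₁ + p₂)) → ℝ) (s₁ s₂ : ℕ) (α : ℝ)
    (β : EuclideanSpace ℝ (Fin (p₁ + p₂))) : Prop :=
  part1 β ∈ projSet {v | zeroNorm v ≤ s₁} (part1 β - α • part1 (gradient f β)) ∧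
  part2 β ∈ projSet {v | zeroNorm v ≤ s₂} (part2 β - α • part2 (gradient f β))

end SCL

namespace List

variable {α : Type*} [LinearOrder α] {l : List α} {t : α} {k : ℕ}

theorem Pairwise.length_sub_le_countP_le (hl : l.Pairwise (· ≤ ·)) (hk : k < l.length)
    (ht : t ≤ l[k]) : l.length - k ≤ l.countP (fun x => t ≤ x) := by
  have hdrop : (l.drop k).countP (fun x => t ≤ x) = l.length - k := by
    rw [countP_eq_length.mpr, length_drop]
    intro x hx
    obtain ⟨j, hj, rfl⟩ := getElem_of_mem hx
    rw [length_drop] at hj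
    simpa using ht.trans (hl.rel_get_of_le (a := ⟨k, hk⟩) (b := ⟨k + j, by omega⟩) (by simp))
  exact hdrop ▸ (drop_sublist k l).countP_le

theorem Pairwise.countP_lt_lt_length_sub (hl : l.Pairwise (· ≤ ·)) (hk : k < l.length)
    (ht : l[k] ≤ t) : l.countP (fun x => t < x) < l.length - k := by
  have htake : (l.take (k + 1)).countP (fun x => t < x) = 0 := by
    rw [countP_eq_zero]
    intro x hx
    obtain ⟨j, hj, rfl⟩ := getElem_of_mem hx
    rw [length_take] at hj
    simpa using (hl.rel_get_of_le (a := ⟨j, by omega⟩) (b := ⟨k, hk⟩) (by simp; omega)).trans ht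
  have hsplit := countP_append (p := fun x => t < x) (l₁ := l.take (k + 1)) (l₂ := l.drop (k + 1))
  rw [take_append_drop, htake, zero_add] at hsplit
  have hdrop := (l.drop (k + 1)).countP_le_length (p := fun x => t < x)
  rw [length_drop] at hdrop
  omega

end List

theorem zeroNorm_eq_card {p : ℕ} (x : EuclideanSpace ℝ (Fin p)) : zeroNorm x = #{i | x i ≠ 0} := by
  rw [zeroNorm, ← Set.ncard_coe_finset, coe_filter]
  simp

section KthLargest

variable {p k : ℕ} (x : EuclideanSpace ℝ (Fin p))

noncomputable def absSorted : List ℝ :=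
  (univ.val.map fun i => |x i|).sort (· ≤ ·)

theorem length_absSorted : (absSorted x).length = p := by
  simp [absSorted]

theorem pairwise_absSorted : (absSorted x).Pairwise (· ≤ ·) :=
  Multiset.pairwise_sort _ _

theorem countP_absSorted (P : ℝ → Prop) [DecidablePred P] :
    (absSorted x).countP (fun a => P a) = #{i | P |x i|} := by
  rw [absSorted, ← Multiset.coe_countP, Multiset.sort_eq, Multiset.countP_map]
  rfl

theorem kthLargestAbs_eq_getElem (hk0 : 0 < k) (hkp : k ≤ p) :
    kthLargestAbs x k = (absSorted x)[p - k]'(by rw [length_absSorted]; omega) :=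
  List.getD_eq_getElem ..

theorem kthLargestAbs_nonneg : 0 ≤ kthLargestAbs x k := by
  change 0 ≤ (absSorted x).getD (p - k) 0
  rcases lt_or_ge (p - k) (absSorted x).length with h | h
  · rw [List.getD_eq_getElem _ _ h]
    obtain ⟨i, -, hi⟩ := Multiset.mem_map.mp ((Multiset.mem_sort _).mp (List.getElem_mem h))
    exact hi ▸ abs_nonneg _
  · rw [List.getD_eq_default _ _ h]

theorem le_card_kthLargestAbs_le (hk0 : 0 < k) (hkp : k ≤ p) :
    k ≤ #{i | kthLargestAbs x k ≤ |x i|} := by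
  have := (pairwise_absSorted x).length_sub_le_countP_le (k := p - k) _
    (kthLargestAbs_eq_getElem x hk0 hkp).le
  rw [countP_absSorted, length_absSorted] at this
  omega

theorem card_kthLargestAbs_lt_lt (hk0 : 0 < k) (hkp : k ≤ p) :
    #{i | kthLargestAbs x k < |x i|} < k := by
  have := (pairwise_absSorted x).countP_lt_lt_length_sub (k := p - k) _
    (kthLargestAbs_eq_getElem x hk0 hkp).ge
  rw [countP_absSorted, length_absSorted] at this
  omega

theorem card_kthLargestAbs_le_eq (hk0 : 0 < k) (hkp : k < p)
    (hgap : kthLargestAbs x (k + 1) < kthLargestAbs x k) :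
    #{i | kthLargestAbs x k ≤ |x i|} = k := by
  refine le_antisymm (Nat.lt_succ_iff.mp ?_) (le_card_kthLargestAbs_le x hk0 hkp.le)
  calc #{i | kthLargestAbs x k ≤ |x i|} ≤ #{i | kthLargestAbs x (k + 1) < |x i|} :=
        card_le_card fun i hi => by simp only [mem_filter] at hi ⊢; exact ⟨hi.1, hgap.trans_le hi.2⟩
    _ < k + 1 := card_kthLargestAbs_lt_lt x k.succ_pos hkp

theorem zeroNorm_lt_of_kthLargestAbs_eq_zero (hk0 : 0 < k) (hkp : k ≤ p)
    (h : kthLargestAbs x k = 0) : zeroNorm x < k := by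
  rw [zeroNorm_eq_card]
  simpa [h] using card_kthLargestAbs_lt_lt x hk0 hkp

end KthLargest

theorem Finset.sum_lt_sum_of_card_le_of_threshold {ι : Type*} [DecidableEq ι] {f : ι → ℝ}
    {S T : Finset ι} {τ : ℝ} (hτ : 0 < τ) (hS : ∀ i ∈ S, τ ≤ f i) (hT : ∀ i ∈ T \ S, f i < τ)
    (hcard : #T ≤ #S) (hne : T ≠ S) : ∑ i ∈ T, f i < ∑ i ∈ S, f i := by
  have hST : (S \ T).Nonempty := by
    rw [nonempty_iff_ne_empty, Ne, sdiff_eq_empty_iff_subset]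
    exact fun h => hne (eq_of_subset_of_card_le h hcard).symm
  have hlower : #(S \ T) * τ ≤ ∑ i ∈ S \ T, f i := by
    simpa using card_nsmul_le_sum (S \ T) f τ fun i hi => hS i (mem_sdiff.mp hi).1
  have hupper : ∑ i ∈ T \ S, f i < #(S \ T) * τ := by
    rcases (T \ S).eq_empty_or_nonempty with hTS | hTS
    · rw [hTS, sum_empty]
      exact mul_pos (by exact_mod_cast hST.card_pos) hτ
    · calc ∑ i ∈ T \ S, f i < ∑ i ∈ T \ S, τ := sum_lt_sum_of_nonempty hTS hT
        _ = #(T \ S) * τ := by rw [sum_const, nsmul_eq_mul]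
        _ ≤ #(S \ T) * τ := by
          gcongr ?_ * _
          exact_mod_cast card_sdiff_le_card_sdiff_iff.mpr hcard
  rw [← sum_inter_add_sum_sdiff T S, ← sum_inter_add_sum_sdiff S T, inter_comm]
  linarith

theorem EuclideanSpace.norm_sub_sq_eq_of_support_subset {ι : Type*} [Fintype ι] [DecidableEq ι]
    {v w : EuclideanSpace ℝ ι} {T : Finset ι} (hv : ∀ i ∉ T, v i = 0) :
    ‖v - w‖ ^ 2 = ∑ i ∈ T, (v i - w i) ^ 2 + (‖w‖ ^ 2 - ∑ i ∈ T, w i ^ 2) := by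
  have hcompl : ∑ i ∈ Tᶜ, (v i - w i) ^ 2 = ∑ i ∈ Tᶜ, w i ^ 2 :=
    sum_congr rfl fun i hi => by rw [hv i (mem_compl.mp hi), zero_sub, neg_sq]
  simp only [real_norm_sq_eq, PiLp.sub_apply]
  rw [← sum_add_sum_compl T, ← sum_add_sum_compl T (fun i => w i ^ 2), hcompl]
  ring

theorem projSet_eq_singleton_of_forall_lt {m : ℕ} {S : Set (EuclideanSpace ℝ (Fin m))}
    {w u : EuclideanSpace ℝ (Fin m)} (hu : u ∈ S) (hlt : ∀ v ∈ S, v ≠ u → ‖u - w‖ < ‖v - w‖) :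
    projSet S w = {u} := by
  ext v
  simp only [projSet, Set.mem_ofPred_eq, Set.mem_singleton_iff]
  constructor
  · rintro ⟨hv, hmin⟩
    by_contra hne
    exact (hlt v hv hne).not_ge (hmin u hu)
  · intro hvu
    rw [hvu]
    refine ⟨hu, fun x hx => ?_⟩
    rcases eq_or_ne x u with rfl | hne
    · exact le_rfl
    · exact (hlt x hx hne).le

theorem projSet_eq_singleton_self {m : ℕ} {S : Set (EuclideanSpace ℝ (Fin m))}
    {w : EuclideanSpace ℝ (Fin m)} (hw : w ∈ S) : projSet S w = {w} :=
  projSet_eq_singleton_of_forall_lt hw fun v _ hne => by simpa [sub_eq_zero] using hne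

noncomputable def hardThreshold {ι : Type*} (τ : ℝ) (x : EuclideanSpace ℝ ι) :
    EuclideanSpace ℝ ι :=
  WithLp.toLp 2 fun i => if τ ≤ |x i| then x i else 0

@[simp]
theorem hardThreshold_apply {ι : Type*} (τ : ℝ) (x : EuclideanSpace ℝ ι) (i : ι) :
    hardThreshold τ x i = if τ ≤ |x i| then x i else 0 :=
  rfl

theorem projSet_sparse_eq_hardThreshold {p s : ℕ} {β : EuclideanSpace ℝ (Fin p)} {τ : ℝ}
    (hτ : 0 < τ) (hcard : #{i | τ ≤ |β i|} = s) :
    projSet {v | zeroNorm v ≤ s} β = {hardThreshold τ β} := by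
  set S : Finset (Fin p) := {i | τ ≤ |β i|}
  have hmem : ∀ i, i ∈ S ↔ τ ≤ |β i| := by simp [S]
  have hu_off : ∀ i ∉ S, hardThreshold τ β i = 0 := fun i hi => by simp [(hmem i).not.mp hi]
  have hu_dist : ‖hardThreshold τ β - β‖ ^ 2 = ‖β‖ ^ 2 - ∑ i ∈ S, β i ^ 2 := by
    rw [EuclideanSpace.norm_sub_sq_eq_of_support_subset hu_off,
      sum_eq_zero fun i hi => by simp [(hmem i).mp hi], zero_add]
  refine projSet_eq_singleton_of_forall_lt ?_ fun v hv hne => ?_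
  · rw [Set.mem_ofPred_eq, zeroNorm_eq_card, ← hcard]
    exact card_le_card fun i hi => by_contra fun hiS => (mem_filter.mp hi).2 (hu_off i hiS)
  set Γ : Finset (Fin p) := {i | v i ≠ 0}
  have hv_off : ∀ i ∉ Γ, v i = 0 := by simp [Γ]
  rw [← sq_lt_sq₀ (norm_nonneg _) (norm_nonneg _), hu_dist,
    EuclideanSpace.norm_sub_sq_eq_of_support_subset hv_off]
  by_cases hΓS : Γ = S
  · have hdiff : ∃ i ∈ S, v i ≠ β i := by
      by_contra! h
      refine hne (PiLp.ext fun i => ?_)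
      by_cases hi : i ∈ S
      · simp [h i hi, (hmem i).mp hi]
      · rw [hu_off i hi, hv_off i (hΓS ▸ hi)]
    have : 0 < ∑ i ∈ S, (v i - β i) ^ 2 := by
      obtain ⟨i, hi, hvi⟩ := hdiff
      exact sum_pos' (fun i _ => sq_nonneg _) ⟨i, hi, by positivity⟩
    rw [hΓS]
    linarith
  · have hsum := sum_lt_sum_of_card_le_of_threshold (f := fun i => β i ^ 2) (pow_pos hτ 2)
      (fun i hi => by simpa using pow_le_pow_left₀ hτ.le ((hmem i).mp hi) 2)
      (fun i hi => by
        simpa using pow_lt_pow_left₀ (not_le.mp ((hmem i).not.mp (mem_sdiff.mp hi).2))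
          (abs_nonneg _) two_ne_zero)
      (by rw [← zeroNorm_eq_card, hcard]; exact hv) hΓS
    have : 0 ≤ ∑ i ∈ Γ, (v i - β i) ^ 2 := sum_nonneg fun i _ => sq_nonneg _
    linarith

/-- if `β↓_s = 0` or `β↓_s > β↓_{s+1}`, the Euclidean projection of `β` onto
`Σ_s^p` consists of exactly one vector `u`, with `u_i = β_i` when `|β_i| ≥ β↓_s` and
`u_i = 0` when `|β_i| < β↓_s`. -/
theorem hard_thresholding_projection_unique {p s : ℕ} (hs : 0 < s) (hsp : s < p)
    (β : EuclideanSpace ℝ (Fin p))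
    (h : kthLargestAbs β s = 0 ∨ kthLargestAbs β (s + 1) < kthLargestAbs β s)
    (u : EuclideanSpace ℝ (Fin p))
    (hu : ∀ i, u i = if kthLargestAbs β s ≤ |β i| then β i else 0) :
    projSet {v | zeroNorm v ≤ s} β = {u} := by
  rcases h with hτ | hgap
  · have hu_eq : u = β := PiLp.ext fun i => by simp [hu, hτ]
    rw [hu_eq]
    exact projSet_eq_singleton_self (zeroNorm_lt_of_kthLargestAbs_eq_zero β hs hsp.le hτ).le
  · have hu_eq : u = hardThreshold (kthLargestAbs β s) β := PiLp.ext fun i => by simp [hu]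
    rw [hu_eq]
    exact projSet_sparse_eq_hardThreshold ((kthLargestAbs_nonneg β).trans_lt hgap)
      (card_kthLargestAbs_le_eq β hs hsp hgap)
end

section
/- Let ℓ ∈ {ℓ_log, ℓ_lin}, let f be the SCL objective, and let β* = (β₁*; β₂*) satisfy ‖β₁*‖₀ ≤ s₁ and ‖β₂*‖₀ ≤ s₂. Then β* is a local minimizer of the SCL problem if and only if for j = 1, 2: (∇_{β_j} f(β*))_i = 0 for all i ∈ Γ(β_j*) in case ‖β_j*‖₀ = s_j, and ∇_{β_j} f(β*) = 0 in case ‖β_j*‖₀ < s_j. -/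
/-
The SCL objective is convex and differentiable: both losses and the coupling term are sums of
convex scalar functions of linear functionals of `β`. Near a feasible `β*`, every feasible `β`
keeps the support of `β*`, and in a saturated block (`‖β_j*‖₀ = s_j`) it has exactly that support.
The stated conditions therefore make `⟪∇f(β*), β - β*⟫` vanish on a feasible neighbourhood, and
the first-order inequality for convex functions gives `f β* ≤ f β`. Conversely, along a coordinate
in the support of a saturated block, or any coordinate of an unsaturated block, the whole line
through `β*` stays feasible, so that partial derivative vanishes at a local minimizer.
-/

open Matrix Filter Topology Finset
open scoped RealInnerProductSpace

open Set

section FirstOrder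

variable {E : Type*} [NormedAddCommGroup E] [NormedSpace ℝ E] {f : E → ℝ} {f' : E →L[ℝ] ℝ}
  {S : Set E} {x : E}

theorem ConvexOn.add_apply_sub_le_of_hasFDerivAt (hf : ConvexOn ℝ univ f)
    (hf' : HasFDerivAt f f' x) (y : E) : f x + f' (y - x) ≤ f y := by
  let φ : ℝ → ℝ := fun t => f (x + t • (y - x))
  have hφ : ConvexOn ℝ univ φ := by
    simpa [Function.comp_def, AffineMap.lineMap_apply_module', add_comm] using
      hf.comp_affineMap (AffineMap.lineMap x y)
  have hφ' : HasDerivAt φ (f' (y - x)) 0 := by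
    have hline : HasDerivAt (fun t : ℝ => x + t • (y - x)) (y - x) 0 := by
      simpa using ((hasDerivAt_id (0 : ℝ)).smul_const (y - x)).const_add x
    exact (by simpa using hf' : HasFDerivAt f f' (x + (0 : ℝ) • (y - x))).comp_hasDerivAt 0 hline
  have := hφ.le_slope_of_hasDerivAt (mem_univ 0) (mem_univ 1) one_pos hφ'
  simp only [slope_def_field, φ, zero_smul, one_smul, add_zero, add_sub_cancel, sub_zero,
    div_one] at this
  linarith

theorem isLocalMinOn_of_convexOn_of_hasFDerivAt (hf : ConvexOn ℝ univ f)
    (hf' : HasFDerivAt f f' x) (h : ∀ᶠ y in 𝓝[S] x, 0 ≤ f' (y - x)) : IsLocalMinOn f S x :=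
  h.mono fun y hy => by linarith [hf.add_apply_sub_le_of_hasFDerivAt hf' y]

theorem IsLocalMinOn.apply_eq_zero_of_forall_add_smul_mem (h : IsLocalMinOn f S x)
    (hf' : HasFDerivAt f f' x) {v : E} (hv : ∀ t : ℝ, x + t • v ∈ S) : f' v = 0 := by
  have hcone : ∀ w : E, (∀ t : ℝ, x + t • w ∈ S) → w ∈ posTangentConeAt S x := fun w hw =>
    mem_posTangentConeAt_of_segment_subset <| by
      rw [segment_eq_image']
      rintro _ ⟨t, -, rfl⟩
      simpa using hw t
  exact h.hasFDerivWithinAt_eq_zero hf'.hasFDerivWithinAt (hcone v hv)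
    (hcone (-v) fun t => by simpa using hv (-t))

end FirstOrder

theorem convexOn_finset_sum {ι E : Type*} [AddCommGroup E] [Module ℝ E] {C : Set E}
    (hC : Convex ℝ C) (s : Finset ι) {f : ι → E → ℝ} (hf : ∀ i ∈ s, ConvexOn ℝ C (f i)) :
    ConvexOn ℝ C fun x => ∑ i ∈ s, f i x := by
  classical
  induction s using Finset.induction_on with
  | empty => simpa using convexOn_const 0 hC
  | insert i s hi ih =>
    simp only [Finset.sum_insert hi]
    exact (hf i (s.mem_insert_self i)).add (ih fun j hj => hf j (Finset.mem_insert_of_mem hj))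

theorem convexOn_log_one_add_exp : ConvexOn ℝ univ fun t => Real.log (1 + Real.exp t) := by
  have hderiv : ∀ t, HasDerivAt (fun t => Real.log (1 + Real.exp t))
      (Real.exp t / (1 + Real.exp t)) t := fun t =>
    ((Real.hasDerivAt_exp t).const_add 1).log (by positivity)
  refine Monotone.convexOn_univ_of_deriv (fun t => (hderiv t).differentiableAt) ?_
  rw [funext fun t => (hderiv t).deriv]
  intro s t hst
  rw [div_le_div_iff₀ (by positivity) (by positivity)]
  nlinarith [Real.exp_le_exp.mpr hst]

theorem convexOn_sub_sq (c : ℝ) : ConvexOn ℝ univ fun t : ℝ => (c - t) ^ 2 := by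
  simpa using ((even_two.convexOn_pow (𝕜 := ℝ)).translate_right (-c)).congr fun t _ => by
    simp only [Function.comp_apply]; ring

theorem mulVec_apply_eq_innerSL {m ι : Type*} [Fintype ι] (X : Matrix m ι ℝ)
    (β : EuclideanSpace ℝ ι) (i : m) :
    X.mulVec β i = innerSL ℝ (WithLp.toLp 2 (X i) : EuclideanSpace ℝ ι) β := by
  simp [PiLp.inner_apply, Matrix.mulVec, dotProduct, mul_comm]

section Losses

variable {n p : ℕ} (X : Matrix (Fin n) (Fin p) ℝ) (y : Fin n → ℝ)

theorem convexOn_ellLog : ConvexOn ℝ univ (ellLog X y) := by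
  have := convexOn_finset_sum convex_univ Finset.univ fun i _ =>
    (convexOn_log_one_add_exp.sub ((LinearMap.mul ℝ ℝ (y i)).concaveOn convex_univ)).comp_linearMap
      (innerSL ℝ (WithLp.toLp 2 (X i) : EuclideanSpace ℝ (Fin p))).toLinearMap
  refine this.congr fun β _ => ?_
  simp [ellLog, mulVec_apply_eq_innerSL]

theorem convexOn_ellLin : ConvexOn ℝ univ (ellLin X y) := by
  have := convexOn_finset_sum convex_univ Finset.univ fun i _ =>
    (convexOn_sub_sq (y i)).comp_linearMap
      (innerSL ℝ (WithLp.toLp 2 (X i) : EuclideanSpace ℝ (Fin p))).toLinearMap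
  refine (this.smul (by norm_num : (0 : ℝ) ≤ 1 / 2)).congr fun β _ => ?_
  simp [ellLin, mulVec_apply_eq_innerSL]

theorem differentiable_ellLog : Differentiable ℝ (ellLog X y) := by
  unfold ellLog
  simp only [mulVec_apply_eq_innerSL]
  fun_prop (disch := exact fun _ => by positivity)

theorem differentiable_ellLin : Differentiable ℝ (ellLin X y) := by
  unfold ellLin
  simp only [mulVec_apply_eq_innerSL]
  fun_prop

end Losses

noncomputable def part1CLM (p₁ p₂ : ℕ) :
    EuclideanSpace ℝ (Fin (p₁ + p₂)) →L[ℝ] EuclideanSpace ℝ (Fin p₁) :=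
  LinearMap.toContinuousLinearMap
    { toFun := part1, map_add' := fun _ _ => rfl, map_smul' := fun _ _ => rfl }

noncomputable def part2CLM (p₁ p₂ : ℕ) :
    EuclideanSpace ℝ (Fin (p₁ + p₂)) →L[ℝ] EuclideanSpace ℝ (Fin p₂) :=
  LinearMap.toContinuousLinearMap
    { toFun := part2, map_add' := fun _ _ => rfl, map_smul' := fun _ _ => rfl }

section Blocks

variable {p₁ p₂ : ℕ}

@[simp]
theorem coe_part1CLM : ⇑(part1CLM p₁ p₂) = part1 := rfl

@[simp]
theorem coe_part2CLM : ⇑(part2CLM p₁ p₂) = part2 := rfl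

@[fun_prop]
theorem differentiable_part1 : Differentiable ℝ (part1 : EuclideanSpace ℝ (Fin (p₁ + p₂)) → _) :=
  (part1CLM p₁ p₂).differentiable

@[fun_prop]
theorem differentiable_part2 : Differentiable ℝ (part2 : EuclideanSpace ℝ (Fin (p₁ + p₂)) → _) :=
  (part2CLM p₁ p₂).differentiable

section

variable (β : EuclideanSpace ℝ (Fin (p₁ + p₂))) (t : ℝ)

theorem Fin.castAdd_ne_natAdd (i : Fin p₁) (j : Fin p₂) : Fin.castAdd p₂ i ≠ Fin.natAdd p₁ j :=
  Fin.ne_of_val_ne (by simp only [Fin.val_castAdd, Fin.val_natAdd]; omega)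

theorem part1_add_smul_single_castAdd (i : Fin p₁) :
    part1 (β + t • EuclideanSpace.single (Fin.castAdd p₂ i) 1) =
      part1 β + t • EuclideanSpace.single i 1 := by
  ext j
  simp [part1, PiLp.single_apply]

theorem part2_add_smul_single_castAdd (i : Fin p₁) :
    part2 (β + t • EuclideanSpace.single (Fin.castAdd p₂ i) 1) = part2 β := by
  ext j
  simp [part2, PiLp.single_apply, (Fin.castAdd_ne_natAdd i j).symm]

theorem part1_add_smul_single_natAdd (i : Fin p₂) :
    part1 (β + t • EuclideanSpace.single (Fin.natAdd p₁ i) 1) = part1 β := by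
  ext j
  simp [part1, PiLp.single_apply, Fin.castAdd_ne_natAdd j i]

theorem part2_add_smul_single_natAdd (i : Fin p₂) :
    part2 (β + t • EuclideanSpace.single (Fin.natAdd p₁ i) 1) =
      part2 β + t • EuclideanSpace.single i 1 := by
  ext j
  simp [part2, PiLp.single_apply]

theorem part1_sub (γ : EuclideanSpace ℝ (Fin (p₁ + p₂))) : part1 (β - γ) = part1 β - part1 γ := rfl

theorem part2_sub (γ : EuclideanSpace ℝ (Fin (p₁ + p₂))) : part2 (β - γ) = part2 β - part2 γ := rfl

theorem inner_eq_inner_part1_add_inner_part2 (γ : EuclideanSpace ℝ (Fin (p₁ + p₂))) :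
    ⟪β, γ⟫ = ⟪part1 β, part1 γ⟫ + ⟪part2 β, part2 γ⟫ := by
  simp [PiLp.inner_apply, Fin.sum_univ_add, part1, part2]

end

end Blocks

section Objective

variable {n p₁ p₂ : ℕ}
    {ℓ₁ : Matrix (Fin n) (Fin p₁) ℝ → (Fin n → ℝ) → EuclideanSpace ℝ (Fin p₁) → ℝ}
    {ℓ₂ : Matrix (Fin n) (Fin p₂) ℝ → (Fin n → ℝ) → EuclideanSpace ℝ (Fin p₂) → ℝ}
    {X : Matrix (Fin n) (Fin p₁) ℝ} {Z : Matrix (Fin n) (Fin p₂) ℝ} {y : Fin n → ℝ} {a b c : ℝ}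

theorem convexOn_sclObj (hℓ₁ : ConvexOn ℝ univ (ℓ₁ X y)) (hℓ₂ : ConvexOn ℝ univ (ℓ₂ Z y))
    (ha : 0 ≤ a) (hb : 0 ≤ b) (hc : 0 ≤ c) : ConvexOn ℝ univ (sclObj ℓ₁ ℓ₂ X Z y a b c) := by
  have h₁ := hℓ₁.comp_linearMap (part1CLM p₁ p₂).toLinearMap
  have h₂ := hℓ₂.comp_linearMap (part2CLM p₁ p₂).toLinearMap
  have h₃ := convexOn_finset_sum convex_univ Finset.univ fun i _ =>
    (even_two.convexOn_pow (𝕜 := ℝ)).comp_linearMap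
      (innerSL ℝ (WithLp.toLp 2 (X i) : EuclideanSpace ℝ (Fin p₁)) ∘L part1CLM p₁ p₂ -
        innerSL ℝ (WithLp.toLp 2 (Z i) : EuclideanSpace ℝ (Fin p₂)) ∘L part2CLM p₁ p₂).toLinearMap
  rw [preimage_univ] at h₁ h₂
  refine ((((h₁.smul ha).add (h₂.smul hb)).add (h₃.smul (by positivity : 0 ≤ c / 2))).smul
    (by positivity : (0 : ℝ) ≤ 1 / n)).congr fun β _ => ?_
  simp [sclObj, mulVec_apply_eq_innerSL]

theorem differentiable_sclObj (hℓ₁ : Differentiable ℝ (ℓ₁ X y))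
    (hℓ₂ : Differentiable ℝ (ℓ₂ Z y)) : Differentiable ℝ (sclObj ℓ₁ ℓ₂ X Z y a b c) := by
  unfold sclObj
  simp only [mulVec_apply_eq_innerSL]
  fun_prop

end Objective

theorem support_add_smul_single_subset {ι : Type*} [DecidableEq ι]
    (v : EuclideanSpace ℝ ι) (i : ι) (t : ℝ) :
    {j | (v + t • EuclideanSpace.single i 1 : EuclideanSpace ℝ ι) j ≠ 0} ⊆
      insert i {j | v j ≠ 0} := by
  intro j hj
  by_cases hji : j = i
  · exact Or.inl hji
  · exact Or.inr (by simpa [hji] using hj)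

theorem eventually_forall_apply_ne_zero {ι : Type*} [Finite ι] (v : EuclideanSpace ℝ ι) :
    ∀ᶠ w in 𝓝 v, ∀ i, v i ≠ 0 → w i ≠ 0 :=
  eventually_all.2 fun i => by
    by_cases hi : v i = 0
    · exact Eventually.of_forall fun _ h => absurd hi h
    · exact ((EuclideanSpace.proj i).continuous.continuousAt.eventually_ne hi).mono fun _ h _ => h

section Sparse

variable {p : ℕ} {s : ℕ} {v g : EuclideanSpace ℝ (Fin p)}

def SparseStationary (s : ℕ) (v g : EuclideanSpace ℝ (Fin p)) : Prop :=
  (zeroNorm v = s → ∀ i, v i ≠ 0 → g i = 0) ∧ (zeroNorm v < s → g = 0)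

theorem zeroNorm_add_smul_single_le_succ (i : Fin p) (t : ℝ) :
    zeroNorm (v + t • EuclideanSpace.single i 1) ≤ zeroNorm v + 1 :=
  (Set.ncard_le_ncard (support_add_smul_single_subset v i t)).trans (Set.ncard_insert_le _ _)

theorem zeroNorm_add_smul_single_le {i : Fin p} (hi : v i ≠ 0) (t : ℝ) :
    zeroNorm (v + t • EuclideanSpace.single i 1) ≤ zeroNorm v := by
  have := support_add_smul_single_subset v i t
  rw [Set.insert_eq_of_mem hi] at this
  exact Set.ncard_le_ncard this

theorem sparseStationary_of_forall_line
    (h : ∀ i, (∀ t : ℝ, zeroNorm (v + t • EuclideanSpace.single i 1) ≤ s) → g i = 0) :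
    SparseStationary s v g :=
  ⟨fun hs i hi => h i fun t => hs ▸ zeroNorm_add_smul_single_le hi t,
    fun hs => by
      ext i
      exact h i fun t => (zeroNorm_add_smul_single_le_succ i t).trans hs⟩

theorem SparseStationary.eventually_inner_sub_eq_zero (h : SparseStationary s v g)
    (hv : zeroNorm v ≤ s) : ∀ᶠ w in 𝓝 v, zeroNorm w ≤ s → ⟪g, w - v⟫ = 0 := by
  rcases hv.lt_or_eq with hlt | heq
  · exact Eventually.of_forall fun w _ => by simp [h.2 hlt]
  filter_upwards [eventually_forall_apply_ne_zero v] with w hsupp hw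
  have hsupp_eq : {i | v i ≠ 0} = {i | w i ≠ 0} :=
    Set.eq_of_subset_of_ncard_le hsupp (hw.trans heq.ge) (Set.toFinite _)
  refine Finset.sum_eq_zero fun i _ => ?_
  by_cases hi : v i = 0
  · have hwi : w i = 0 := by
      by_contra hwi
      exact (hsupp_eq ▸ hwi : i ∈ {i | v i ≠ 0}) hi
    simp [hi, hwi]
  · simp [h.1 heq i hi]

end Sparse

section Feasible

variable {p₁ p₂ s₁ s₂ : ℕ} {f : EuclideanSpace ℝ (Fin (p₁ + p₂)) → ℝ}
  {g βs : EuclideanSpace ℝ (Fin (p₁ + p₂))}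

theorem IsLocalMinOn.sparseStationary_feas (hmin : IsLocalMinOn f (feas p₁ p₂ s₁ s₂) βs)
    (hg : HasGradientAt f g βs) (hfeas₁ : zeroNorm (part1 βs) ≤ s₁)
    (hfeas₂ : zeroNorm (part2 βs) ≤ s₂) :
    SparseStationary s₁ (part1 βs) (part1 g) ∧ SparseStationary s₂ (part2 βs) (part2 g) := by
  have hcoord : ∀ k, (∀ t : ℝ, βs + t • EuclideanSpace.single k 1 ∈ feas p₁ p₂ s₁ s₂) →
      g k = 0 := fun k hk => by
    have := hmin.apply_eq_zero_of_forall_add_smul_mem hg.hasFDerivAt hk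
    rwa [InnerProductSpace.toDual_apply_apply, EuclideanSpace.inner_single_right, one_mul,
      conj_trivial] at this
  refine ⟨sparseStationary_of_forall_line fun i hi => hcoord (Fin.castAdd p₂ i) fun t => ?_,
    sparseStationary_of_forall_line fun i hi => hcoord (Fin.natAdd p₁ i) fun t => ?_⟩
  · exact ⟨part1_add_smul_single_castAdd βs t i ▸ hi t,
      part2_add_smul_single_castAdd βs t i ▸ hfeas₂⟩
  · exact ⟨part1_add_smul_single_natAdd βs t i ▸ hfeas₁,
      part2_add_smul_single_natAdd βs t i ▸ hi t⟩

theorem isLocalMinOn_feas_of_sparseStationary (hconv : ConvexOn ℝ univ f)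
    (hg : HasGradientAt f g βs) (hfeas₁ : zeroNorm (part1 βs) ≤ s₁)
    (hfeas₂ : zeroNorm (part2 βs) ≤ s₂) (h₁ : SparseStationary s₁ (part1 βs) (part1 g))
    (h₂ : SparseStationary s₂ (part2 βs) (part2 g)) : IsLocalMinOn f (feas p₁ p₂ s₁ s₂) βs := by
  refine isLocalMinOn_of_convexOn_of_hasFDerivAt hconv hg.hasFDerivAt ?_
  have e₁ := (differentiable_part1.continuous.tendsto βs).eventually
    (h₁.eventually_inner_sub_eq_zero hfeas₁)
  have e₂ := (differentiable_part2.continuous.tendsto βs).eventually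
    (h₂.eventually_inner_sub_eq_zero hfeas₂)
  filter_upwards [nhdsWithin_le_nhds e₁, nhdsWithin_le_nhds e₂, self_mem_nhdsWithin]
    with β hβ₁ hβ₂ hβ
  rw [InnerProductSpace.toDual_apply_apply, inner_eq_inner_part1_add_inner_part2, part1_sub,
    part2_sub, hβ₁ hβ.1, hβ₂ hβ.2, add_zero]

end Feasible

theorem scl_local_minimizer_iff_first_order_general {n p₁ p₂ : ℕ}
    (X : Matrix (Fin n) (Fin p₁) ℝ) (Z : Matrix (Fin n) (Fin p₂) ℝ) (y : Fin n → ℝ)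
    (s₁ s₂ : ℕ)
    (a b c : ℝ) (ha : 0 < a) (hb : 0 < b) (hc : 0 < c)
    (ℓ₁ : Matrix (Fin n) (Fin p₁) ℝ → (Fin n → ℝ) → EuclideanSpace ℝ (Fin p₁) → ℝ)
    (ℓ₂ : Matrix (Fin n) (Fin p₂) ℝ → (Fin n → ℝ) → EuclideanSpace ℝ (Fin p₂) → ℝ)
    (hℓ : (ℓ₁ = ellLog ∧ ℓ₂ = ellLog) ∨ (ℓ₁ = ellLin ∧ ℓ₂ = ellLin))
    (f : EuclideanSpace ℝ (Fin (p₁ + p₂)) → ℝ)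
    (hf : f = sclObj ℓ₁ ℓ₂ X Z y a b c)
    (βs : EuclideanSpace ℝ (Fin (p₁ + p₂)))
    (hfeas₁ : zeroNorm (part1 βs) ≤ s₁) (hfeas₂ : zeroNorm (part2 βs) ≤ s₂) :
    IsLocalMinOn f (feas p₁ p₂ s₁ s₂) βs ↔
      ((zeroNorm (part1 βs) = s₁ →
          ∀ i, part1 βs i ≠ 0 → part1 (gradient f βs) i = 0) ∧
       (zeroNorm (part1 βs) < s₁ → part1 (gradient f βs) = 0) ∧
       (zeroNorm (part2 βs) = s₂ →
          ∀ i, part2 βs i ≠ 0 → part2 (gradient f βs) i = 0) ∧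
       (zeroNorm (part2 βs) < s₂ → part2 (gradient f βs) = 0)) := by
  obtain ⟨hconv, hdiff⟩ : ConvexOn ℝ univ f ∧ Differentiable ℝ f := by
    rcases hℓ with ⟨rfl, rfl⟩ | ⟨rfl, rfl⟩ <;> subst hf
    · exact ⟨convexOn_sclObj (convexOn_ellLog X y) (convexOn_ellLog Z y) ha.le hb.le hc.le,
        differentiable_sclObj (differentiable_ellLog X y) (differentiable_ellLog Z y)⟩
    · exact ⟨convexOn_sclObj (convexOn_ellLin X y) (convexOn_ellLin Z y) ha.le hb.le hc.le,
        differentiable_sclObj (differentiable_ellLin X y) (differentiable_ellLin Z y)⟩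
  have hg := (hdiff βs).hasGradientAt
  rw [← and_assoc]
  exact ⟨fun hmin => hmin.sparseStationary_feas hg hfeas₁ hfeas₂,
    fun ⟨h₁, h₂⟩ => isLocalMinOn_feas_of_sparseStationary hconv hg hfeas₁ hfeas₂ h₁ h₂⟩

/-- for `ℓ ∈ {ℓ_log, ℓ_lin}`, a feasible point `β* = (β₁*; β₂*)` is a local
minimizer of the SCL problem iff for `j = 1, 2`: `(∇_{β_j}f(β*))_i = 0` for all
`i ∈ Γ(β_j*)` when `‖β_j*‖₀ = s_j`, and `∇_{β_j}f(β*) = 0` when `‖β_j*‖₀ < s_j`. -/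
theorem scl_local_minimizer_iff_first_order {n p₁ p₂ : ℕ} (hn : 0 < n)
    (X : Matrix (Fin n) (Fin p₁) ℝ) (Z : Matrix (Fin n) (Fin p₂) ℝ) (y : Fin n → ℝ)
    (s₁ s₂ : ℕ) (hs₁ : 0 < s₁) (hs₁p : s₁ < p₁) (hs₂ : 0 < s₂) (hs₂p : s₂ < p₂)
    (a b c : ℝ) (ha : 0 < a) (hb : 0 < b) (hc : 0 < c)
    (ℓ₁ : Matrix (Fin n) (Fin p₁) ℝ → (Fin n → ℝ) → EuclideanSpace ℝ (Fin p₁) → ℝ)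
    (ℓ₂ : Matrix (Fin n) (Fin p₂) ℝ → (Fin n → ℝ) → EuclideanSpace ℝ (Fin p₂) → ℝ)
    (hℓ : (ℓ₁ = ellLog ∧ ℓ₂ = ellLog) ∨ (ℓ₁ = ellLin ∧ ℓ₂ = ellLin))
    (f : EuclideanSpace ℝ (Fin (p₁ + p₂)) → ℝ)
    (hf : f = sclObj ℓ₁ ℓ₂ X Z y a b c)
    (βs : EuclideanSpace ℝ (Fin (p₁ + p₂)))
    (hfeas₁ : zeroNorm (part1 βs) ≤ s₁) (hfeas₂ : zeroNorm (part2 βs) ≤ s₂) :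
    IsLocalMinOn f (feas p₁ p₂ s₁ s₂) βs ↔
      ((zeroNorm (part1 βs) = s₁ →
          ∀ i, part1 βs i ≠ 0 → part1 (gradient f βs) i = 0) ∧
       (zeroNorm (part1 βs) < s₁ → part1 (gradient f βs) = 0) ∧
       (zeroNorm (part2 βs) = s₂ →
          ∀ i, part2 βs i ≠ 0 → part2 (gradient f βs) i = 0) ∧
       (zeroNorm (part2 βs) < s₂ → part2 (gradient f βs) = 0)) :=
  scl_local_minimizer_iff_first_order_general X Z y s₁ s₂ a b c ha hb hc ℓ₁ ℓ₂ hℓ f hf βs hfeas₁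
    hfeas₂
end

section
/- Let f : ℝ^m → ℝ be continuously differentiable and strongly smooth with parameter L_f > 0, let S ⊆ ℝ^m be nonempty and closed, let σ > 0 and 0 < α ≤ 1/(σ + L_f). Then for any β ∈ S and any β(α) ∈ argmin{‖u − (β − α∇f(β))‖ : u ∈ S}, it holds that f(β(α)) ≤ f(β) − (σ/2)‖β(α) − β‖². -/
open Matrix Filter Topology Finset
open scoped RealInnerProductSpace

/-! Since `β ∈ S` competes with `β(α)` in the projection of `β - α∇f(β)`, expanding the squared
distances gives `‖β(α) - β‖² + 2α⟪∇f(β), β(α) - β⟫ ≤ 0`. Inserting this into the quadratic upper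
bound of strong smoothness at `β` and using `α(σ + L_f) ≤ 1` yields the decrease. -/

section SufficientDecrease

variable {E : Type*} [NormedAddCommGroup E] [InnerProductSpace ℝ E]

theorem norm_sq_add_two_mul_inner_nonpos_of_norm_add_le {d a : E} (h : ‖d + a‖ ≤ ‖a‖) :
    ‖d‖ ^ 2 + 2 * ⟪d, a⟫ ≤ 0 := by
  have hsq : ‖d + a‖ ^ 2 ≤ ‖a‖ ^ 2 := pow_le_pow_left₀ (norm_nonneg _) h 2
  rw [norm_add_sq_real] at hsq
  linarith

theorem le_sub_of_quadratic_upper_bound {f : E → ℝ} {g β d : E} {L σ α : ℝ}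
    (hupper : f (β + d) ≤ f β + ⟪g, d⟫ + L / 2 * ‖d‖ ^ 2) (hα : 0 < α)
    (hstep : α * (σ + L) ≤ 1) (hd : ‖d‖ ^ 2 + 2 * α * ⟪g, d⟫ ≤ 0) :
    f (β + d) ≤ f β - σ / 2 * ‖d‖ ^ 2 := by
  have hgd : 2 * α * ⟪g, d⟫ ≤ -(α * (σ + L)) * ‖d‖ ^ 2 := by
    nlinarith [sq_nonneg ‖d‖]
  nlinarith

end SufficientDecrease

theorem norm_sq_add_two_mul_inner_nonpos_of_mem_projSet {m : ℕ}
    {S : Set (EuclideanSpace ℝ (Fin m))} {u v g : EuclideanSpace ℝ (Fin m)} {α : ℝ}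
    (hu : u ∈ projSet S (v - α • g)) (hv : v ∈ S) :
    ‖u - v‖ ^ 2 + 2 * α * ⟪g, u - v⟫ ≤ 0 := by
  have hclose : ‖(u - v) + α • g‖ ≤ ‖α • g‖ := by
    simpa [sub_sub_eq_add_sub, sub_add_eq_add_sub, add_sub_assoc] using hu.2 v hv
  have := norm_sq_add_two_mul_inner_nonpos_of_norm_add_le hclose
  rwa [real_inner_smul_right, real_inner_comm, ← mul_assoc] at this

theorem gradient_projection_sufficient_decrease_general {m : ℕ}
    (f : EuclideanSpace ℝ (Fin m) → ℝ)
    (Lf : ℝ)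
    (hsmooth : ∀ β d : EuclideanSpace ℝ (Fin m),
      f (β + d) ≤ f β + ⟪gradient f β, d⟫ + Lf / 2 * ‖d‖ ^ 2)
    (S : Set (EuclideanSpace ℝ (Fin m)))
    (σ α : ℝ) (hα0 : 0 < α) (hα1 : α ≤ 1 / (σ + Lf))
    (β : EuclideanSpace ℝ (Fin m)) (hβ : β ∈ S)
    (βα : EuclideanSpace ℝ (Fin m)) (hβα : βα ∈ projSet S (β - α • gradient f β)) :
    f βα ≤ f β - σ / 2 * ‖βα - β‖ ^ 2 := by
  have hpos : 0 < σ + Lf := one_div_pos.mp (hα0.trans_le hα1)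
  have hstep : α * (σ + Lf) ≤ 1 := (le_div_iff₀ hpos).mp hα1
  have hdecrease := le_sub_of_quadratic_upper_bound (hsmooth β (βα - β)) hα0 hstep
    (norm_sq_add_two_mul_inner_nonpos_of_mem_projSet hβα hβ)
  rwa [add_sub_cancel] at hdecrease

/-- if `f` is C¹ and strongly smooth with parameter `L_f > 0`, `S` is nonempty
closed, `σ > 0`, `0 < α ≤ 1/(σ + L_f)`, `β ∈ S` and `β(α)` is a Euclidean projection of
`β − α∇f(β)` onto `S`, then `f(β(α)) ≤ f(β) − (σ/2)‖β(α) − β‖²`. -/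
theorem gradient_projection_sufficient_decrease {m : ℕ}
    (f : EuclideanSpace ℝ (Fin m) → ℝ) (hf : ContDiff ℝ 1 f)
    (Lf : ℝ) (hLf : 0 < Lf)
    (hsmooth : ∀ β d : EuclideanSpace ℝ (Fin m),
      f (β + d) ≤ f β + ⟪gradient f β, d⟫ + Lf / 2 * ‖d‖ ^ 2)
    (S : Set (EuclideanSpace ℝ (Fin m))) (hne : S.Nonempty) (hcl : IsClosed S)
    (σ α : ℝ) (hσ : 0 < σ) (hα0 : 0 < α) (hα1 : α ≤ 1 / (σ + Lf))
    (β : EuclideanSpace ℝ (Fin m)) (hβ : β ∈ S)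
    (βα : EuclideanSpace ℝ (Fin m)) (hβα : βα ∈ projSet S (β - α • gradient f β)) :
    f βα ≤ f β - σ / 2 * ‖βα - β‖ ^ 2 :=
  gradient_projection_sufficient_decrease_general f Lf hsmooth S σ α hα0 hα1 β hβ βα hβα
end

section
/- Let f : ℝ^m → ℝ be twice continuously differentiable with ∇²f Lipschitz continuous with constant C_f > 0 (in the spectral norm). Let Γ ⊆ {1,…,m} and l_f > 0, let u ∈ ℝ^m satisfy Γ(u) ⊆ Γ and ⟨d, ∇²f(u) d⟩ ≥ l_f‖d‖² for all d ∈ ℝ^m with Γ(d) ⊆ Γ, and let β* ∈ ℝ^m satisfy Γ(β*) ⊆ Γ and (∇f(β*))_i = 0 for all i ∈ Γ. Define the Newton iterate v ∈ ℝ^m by (∇²f(u))_{ΓΓ}(v_Γ − u_Γ) = −(∇f(u))_Γ and v_i = 0 for i ∉ Γ (the matrix (∇²f(u))_{ΓΓ} being invertible by the assumption). Then ‖v − β*‖ ≤ (C_f/(2 l_f))‖u − β*‖². -/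
open Matrix Filter Topology Finset
open scoped RealInnerProductSpace

/-!
Write `H = ∇²f(u)` and `d = v − β*`. Both `v` and `β*` vanish off `Γ`, so `d` is supported in `Γ`,
and on `Γ` the Newton equation together with `(∇f(β*))_Γ = 0` gives
`(H d)_i = (∇f(β*) − ∇f(u) − H(β* − u))_i =: r_i`. Hence `l_f ‖d‖² ≤ ⟪d, H d⟫ = ⟪d, r⟫ ≤ ‖d‖ ‖r‖`,
and the Lipschitz continuity of `∇²f` bounds the Taylor remainder `‖r‖ ≤ (C_f/2) ‖β* − u‖²`.
-/

theorem ContDiff.gradient {F : Type*} [NormedAddCommGroup F] [InnerProductSpace ℝ F]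
    [CompleteSpace F] {f : F → ℝ} {m n : WithTop ℕ∞} (hf : ContDiff ℝ n f) (hmn : m + 1 ≤ n) :
    ContDiff ℝ m (gradient f) :=
  (InnerProductSpace.toDual ℝ F).symm.contDiff.comp (hf.fderiv_right hmn)

theorem norm_image_sub_sub_fderiv_le_of_lipschitz_fderiv {E F : Type*}
    [NormedAddCommGroup E] [NormedSpace ℝ E] [NormedAddCommGroup F] [NormedSpace ℝ F]
    {g : E → F} (hg : Differentiable ℝ g) {C : ℝ} {x : E}
    (hlip : ∀ z, ‖fderiv ℝ g z - fderiv ℝ g x‖ ≤ C * ‖z - x‖) (y : E) :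
    ‖g y - g x - fderiv ℝ g x (y - x)‖ ≤ C / 2 * ‖y - x‖ ^ 2 := by
  set w := y - x
  set φ : ℝ → F := fun t => g (x + t • w) - g x - t • fderiv ℝ g x w
  have hφ : ∀ t, HasDerivAt φ (fderiv ℝ g (x + t • w) w - fderiv ℝ g x w) t := by
    intro t
    have hline : HasDerivAt (fun s : ℝ => x + s • w) w t := by
      simpa using ((hasDerivAt_id t).smul_const w).const_add x
    exact (((hg _).hasFDerivAt.comp_hasDerivAt t hline).sub_const (g x)).sub
      (by simpa using (hasDerivAt_id t).smul_const (fderiv ℝ g x w))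
  have hbound : ∀ t ∈ Set.Ico (0 : ℝ) 1,
      ‖fderiv ℝ g (x + t • w) w - fderiv ℝ g x w‖ ≤ C * ‖w‖ ^ 2 * t := by
    rintro t ⟨ht, -⟩
    calc ‖fderiv ℝ g (x + t • w) w - fderiv ℝ g x w‖
        ≤ ‖fderiv ℝ g (x + t • w) - fderiv ℝ g x‖ * ‖w‖ :=
          (fderiv ℝ g (x + t • w) - fderiv ℝ g x).le_opNorm w
      _ ≤ C * ‖t • w‖ * ‖w‖ := by
          gcongr; simpa using hlip (x + t • w)
      _ = C * ‖w‖ ^ 2 * t := by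
          rw [norm_smul, Real.norm_of_nonneg ht]; ring
  have hB : ∀ t, HasDerivAt (fun s : ℝ => C / 2 * ‖w‖ ^ 2 * s ^ 2) (C * ‖w‖ ^ 2 * t) t :=
    fun t => ((hasDerivAt_pow 2 t).const_mul (C / 2 * ‖w‖ ^ 2)).congr_deriv (by push_cast; ring)
  have key := image_norm_le_of_norm_deriv_right_le_deriv_boundary
    (fun t _ => (hφ t).continuousAt.continuousWithinAt) (fun t _ => (hφ t).hasDerivWithinAt)
    (by simp [φ]) hB hbound (Set.right_mem_Icc.2 zero_le_one)
  simpa [φ, w] using key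

theorem norm_le_div_of_mul_sq_le_inner {E : Type*} [NormedAddCommGroup E]
    [InnerProductSpace ℝ E] {l : ℝ} (hl : 0 < l) {d r : E} (h : l * ‖d‖ ^ 2 ≤ ⟪d, r⟫) :
    ‖d‖ ≤ ‖r‖ / l := by
  rw [le_div_iff₀ hl]
  rcases (norm_nonneg d).eq_or_lt with hd | hd
  · rw [← hd, zero_mul]; positivity
  · nlinarith [real_inner_le_norm d r]

theorem EuclideanSpace.inner_eq_of_eqOn_support {ι : Type*} [Fintype ι] {Γ : Finset ι}
    {d a b : EuclideanSpace ℝ ι} (hd : ∀ i, d i ≠ 0 → i ∈ Γ) (hab : ∀ i ∈ Γ, a i = b i) :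
    ⟪d, a⟫ = ⟪d, b⟫ := by
  simp only [PiLp.inner_apply]
  refine Finset.sum_congr rfl fun i _ => ?_
  by_cases hi : d i = 0
  · simp [hi]
  · rw [hab i (hd i hi)]

theorem restricted_newton_quadratic_estimate_general {m : ℕ}
    (f : EuclideanSpace ℝ (Fin m) → ℝ) (hf : ContDiff ℝ 2 f)
    (Cf : ℝ)
    (hlip : ∀ x x' : EuclideanSpace ℝ (Fin m),
      ‖fderiv ℝ (gradient f) x - fderiv ℝ (gradient f) x'‖ ≤ Cf * ‖x - x'‖)
    (Γ : Finset (Fin m)) (lf : ℝ) (hlf : 0 < lf)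
    (u : EuclideanSpace ℝ (Fin m))
    (hpos : ∀ d : EuclideanSpace ℝ (Fin m), (∀ i, d i ≠ 0 → i ∈ Γ) →
      lf * ‖d‖ ^ 2 ≤ ⟪d, (fderiv ℝ (gradient f) u) d⟫)
    (βs : EuclideanSpace ℝ (Fin m))
    (hβsupp : ∀ i, βs i ≠ 0 → i ∈ Γ)
    (hβgrad : ∀ i ∈ Γ, gradient f βs i = 0)
    (v : EuclideanSpace ℝ (Fin m)) (hvsupp : ∀ i, i ∉ Γ → v i = 0)
    (hnewton : ∀ i ∈ Γ, (fderiv ℝ (gradient f) u) (v - u) i = -(gradient f u i)) :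
    ‖v - βs‖ ≤ Cf / (2 * lf) * ‖u - βs‖ ^ 2 := by
  set H := fderiv ℝ (gradient f) u
  set r := gradient f βs - gradient f u - H (βs - u)
  have htaylor : ‖r‖ ≤ Cf / 2 * ‖βs - u‖ ^ 2 :=
    norm_image_sub_sub_fderiv_le_of_lipschitz_fderiv
      ((hf.gradient (by norm_num)).differentiable one_ne_zero) (fun z => hlip z u) βs
  have hsupp : ∀ i, (v - βs) i ≠ 0 → i ∈ Γ := by
    intro i hi
    by_contra hiΓ
    exact hi (by simp [hvsupp i hiΓ, not_imp_comm.1 (hβsupp i) hiΓ])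
  have hHd : ∀ i ∈ Γ, H (v - βs) i = r i := by
    intro i hi
    have hsplit : H (v - βs) = H (v - u) - H (βs - u) := by
      rw [← map_sub, sub_sub_sub_cancel_right]
    rw [hsplit, PiLp.sub_apply, hnewton i hi]
    simp only [r, PiLp.sub_apply, hβgrad i hi]
    ring
  have hcoer := hpos _ hsupp
  rw [EuclideanSpace.inner_eq_of_eqOn_support hsupp hHd] at hcoer
  calc ‖v - βs‖ ≤ ‖r‖ / lf := norm_le_div_of_mul_sq_le_inner hlf hcoer
    _ ≤ Cf / 2 * ‖βs - u‖ ^ 2 / lf := by gcongr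
    _ = Cf / (2 * lf) * ‖u - βs‖ ^ 2 := by rw [norm_sub_rev]; ring

/-- if `∇²f` is `C_f`-Lipschitz (spectral norm), `∇²f(u)` is positive definite
with constant `l_f` on vectors supported in `Γ`, `Γ(u) ⊆ Γ`, `Γ(β*) ⊆ Γ`, `(∇f(β*))_i = 0` on
`Γ`, and `v` is the restricted Newton iterate `(∇²f(u))_{ΓΓ}(v_Γ − u_Γ) = −(∇f(u))_Γ`,
`v_{Γᶜ} = 0`, then `‖v − β*‖ ≤ (C_f/(2l_f))‖u − β*‖²`. -/
theorem restricted_newton_quadratic_estimate {m : ℕ}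
    (f : EuclideanSpace ℝ (Fin m) → ℝ) (hf : ContDiff ℝ 2 f)
    (Cf : ℝ) (hCf : 0 < Cf)
    (hlip : ∀ x x' : EuclideanSpace ℝ (Fin m),
      ‖fderiv ℝ (gradient f) x - fderiv ℝ (gradient f) x'‖ ≤ Cf * ‖x - x'‖)
    (Γ : Finset (Fin m)) (lf : ℝ) (hlf : 0 < lf)
    (u : EuclideanSpace ℝ (Fin m)) (husupp : ∀ i, u i ≠ 0 → i ∈ Γ)
    (hpos : ∀ d : EuclideanSpace ℝ (Fin m), (∀ i, d i ≠ 0 → i ∈ Γ) →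
      lf * ‖d‖ ^ 2 ≤ ⟪d, (fderiv ℝ (gradient f) u) d⟫)
    (βs : EuclideanSpace ℝ (Fin m))
    (hβsupp : ∀ i, βs i ≠ 0 → i ∈ Γ)
    (hβgrad : ∀ i ∈ Γ, gradient f βs i = 0)
    (v : EuclideanSpace ℝ (Fin m)) (hvsupp : ∀ i, i ∉ Γ → v i = 0)
    (hnewton : ∀ i ∈ Γ, (fderiv ℝ (gradient f) u) (v - u) i = -(gradient f u i)) :
    ‖v - βs‖ ≤ Cf / (2 * lf) * ‖u - βs‖ ^ 2 :=
  restricted_newton_quadratic_estimate_general f hf Cf hlip Γ lf hlf u hpos βs hβsupp hβgrad v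
    hvsupp hnewton
end
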